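/- Let α be strictly increasing with α_n > 1, α_n → ∞, and lim_{n→∞} (log n)/α_n = 0 (i.e. Λ₀(α) is nuclear). Then for every m ≥ 1 the range (I − C)^m(Λ₀(α)) of the m-th power of I − C is a closed subspace of Λ₀(α). -/

import Mathlib

open Filter Finset Topology

noncomputable section

/-- The weight `w_k(n) = e^{-alpha_n / k}`.  Indices are shifted by one: the natural
numbers `k n : Nat` represent the indices `k+1` and `n+1` (both running from `1`). -/
def wt (a : ℕ → ℝ) (k n : ℕ) : ℝ := Real.exp (-(a n) / ((k : ℝ) + 1))

/-- Membership in the power series space of finite type `Λ₀(α)`: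
`x ∈ Λ₀(α)` iff `w_k(n)|x_n| → 0` for every `k ≥ 1`. -/
def memLambda (a : ℕ → ℝ) (x : ℕ → ℂ) : Prop :=
  ∀ k : ℕ, Tendsto (fun n => wt a k n * ‖x n‖) atTop (𝓝 0)

/-- The norm `p_k(x) = sup_n w_k(n)|x_n|` generating the Fréchet topology of `Λ₀(α)`. -/
def pk (a : ℕ → ℝ) (k : ℕ) (x : ℕ → ℂ) : ℝ := ⨆ n : ℕ, wt a k n * ‖x n‖

/-- The discrete Cesàro operator `(C x)_n = (x_1 + ⋯ + x_n)/n` (0-indexed). -/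
def cesaro (x : ℕ → ℂ) : ℕ → ℂ := fun n => (∑ i ∈ Finset.range (n + 1), x i) / ((n : ℂ) + 1)

/-- The closure of a subset `S` of `Λ₀(α)` in the Fréchet topology of `Λ₀(α)`
(generated by the increasing sequence of norms `p_k`). -/
def closureIn (a : ℕ → ℝ) (S : Set (ℕ → ℂ)) : Set (ℕ → ℂ) :=
  {x | memLambda a x ∧ ∀ k : ℕ, ∀ ε : ℝ, 0 < ε → ∃ y ∈ S, pk a k (x - y) < ε}

lemma wt_pos (a : ℕ → ℝ) (k n : ℕ) : 0 < wt a k n := Real.exp_pos _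

lemma memLambda_sub {a : ℕ → ℝ} {x y : ℕ → ℂ} (hx : memLambda a x) (hy : memLambda a y) :
    memLambda a (x - y) := by
  intro k
  apply squeeze_zero (fun n => mul_nonneg (wt_pos a k n).le (norm_nonneg _))
    (g := fun n => wt a k n * ‖x n‖ + wt a k n * ‖y n‖)
  · intro n
    have h : ‖(x - y) n‖ ≤ ‖x n‖ + ‖y n‖ := by
      simpa [] using norm_sub_le (x n) (y n)
    nlinarith [wt_pos a k n, norm_nonneg ((x - y) n)]
  · simpa using (hx k).add (hy k)

lemma memLambda_add {a : ℕ → ℝ} {x y : ℕ → ℂ} (hx : memLambda a x) (hy : memLambda a y) :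
    memLambda a (x + y) := by
  intro k
  apply squeeze_zero (fun n => mul_nonneg (wt_pos a k n).le (norm_nonneg _))
    (g := fun n => wt a k n * ‖x n‖ + wt a k n * ‖y n‖)
  · intro n
    have h : ‖(x + y) n‖ ≤ ‖x n‖ + ‖y n‖ := by
      simpa [] using norm_add_le (x n) (y n)
    nlinarith [wt_pos a k n, norm_nonneg ((x + y) n)]
  · simpa using (hx k).add (hy k)

/-- Bound extracted from membership. -/
lemma bound_of_mem {a : ℕ → ℝ} {y : ℕ → ℂ} (hy : memLambda a y) (k : ℕ) :
    ∃ C : ℝ, 0 ≤ C ∧ ∀ n, ‖y n‖ ≤ C * Real.exp (a n / ((k : ℝ) + 1)) := by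
  obtain ⟨C, hC⟩ := (hy k).bddAbove_range
  refine ⟨C, ?_, ?_⟩
  · have h0 : wt a k 0 * ‖y 0‖ ≤ C := hC ⟨0, rfl⟩
    have : (0:ℝ) ≤ wt a k 0 * ‖y 0‖ := mul_nonneg (wt_pos a k 0).le (norm_nonneg _)
    linarith
  · intro n
    have hn : wt a k n * ‖y n‖ ≤ C := hC ⟨n, rfl⟩
    have hid : wt a k n * Real.exp (a n / ((k : ℝ) + 1)) = 1 := by
      rw [wt, ← Real.exp_add]
      simp [Real.exp_eq_one_iff]
      ring
    have hexp : (0:ℝ) < Real.exp (a n / ((k : ℝ) + 1)) := Real.exp_pos _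
    calc ‖y n‖ = wt a k n * Real.exp (a n / ((k : ℝ) + 1)) * ‖y n‖ := by
          rw [hid]; ring
      _ = wt a k n * ‖y n‖ * Real.exp (a n / ((k : ℝ) + 1)) := by ring
      _ ≤ C * Real.exp (a n / ((k : ℝ) + 1)) := by
          apply mul_le_mul_of_nonneg_right hn hexp.le

/-- Nuclearity consequence: `(n+1) e^{-a n / c} → 0`. -/
lemma tend_aux {a : ℕ → ℝ} (h1 : ∀ n, 1 < a n) (htop : Tendsto a atTop atTop)
    (hnuc : Tendsto (fun n : ℕ => Real.log ((n : ℝ) + 1) / a n) atTop (𝓝 0))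
    {c : ℝ} (hc : 0 < c) :
    Tendsto (fun n : ℕ => ((n : ℝ) + 1) * Real.exp (-(a n) / c)) atTop (𝓝 0) := by
  have hpos : ∀ n : ℕ, (0:ℝ) < (n:ℝ) + 1 := fun n => by positivity
  have hexp : ∀ n : ℕ, ((n : ℝ) + 1) * Real.exp (-(a n) / c)
      = Real.exp (a n * (Real.log ((n:ℝ)+1) / a n - 1 / c)) := by
    intro n
    have ha : a n ≠ 0 := by have := h1 n; linarith
    calc ((n : ℝ) + 1) * Real.exp (-(a n) / c)
        = Real.exp (Real.log ((n:ℝ)+1) + -(a n) / c) := by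
          rw [Real.exp_add, Real.exp_log (hpos n)]
      _ = Real.exp (a n * (Real.log ((n:ℝ)+1) / a n - 1 / c)) := by
          congr 1
          field_simp
          ring
  have hlim : Tendsto (fun n : ℕ => a n * (Real.log ((n:ℝ)+1) / a n - 1 / c)) atTop atBot := by
    have hg : Tendsto (fun n : ℕ => Real.log ((n:ℝ)+1) / a n - 1 / c) atTop (𝓝 (0 - 1/c)) :=
      hnuc.sub tendsto_const_nhds
    exact htop.atTop_mul_neg (sub_neg.mpr (by positivity)) hg
  have := Real.tendsto_exp_atBot.comp hlim
  exact this.congr fun n => (hexp n).symm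


/-- helper exp arithmetic: wt(k) * exp(a/(2k+2)) = exp(-a/(2k+2)) -/
lemma wt_mul_exp (a : ℕ → ℝ) (k n : ℕ) :
    wt a k n * Real.exp (a n / (((2*k+1 : ℕ) : ℝ) + 1)) = Real.exp (-(a n) / (2*((k:ℝ)+1))) := by
  rw [wt, ← Real.exp_add]
  congr 1
  have hk : ((k:ℝ)+1) ≠ 0 := by positivity
  push_cast
  field_simp
  ring

lemma memLambda_cesaro {a : ℕ → ℝ} (hmono : StrictMono a) (h1 : ∀ n, 1 < a n)
    (htop : Tendsto a atTop atTop) {x : ℕ → ℂ} (hx : memLambda a x) :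
    memLambda a (cesaro x) := by
  intro k
  obtain ⟨C, hC0, hC⟩ := bound_of_mem hx (2*k+1)
  apply squeeze_zero (fun n => mul_nonneg (wt_pos a k n).le (norm_nonneg _))
    (g := fun n => C * Real.exp (-(a n) / (2*((k:ℝ)+1))))
  · intro n
    have hb : ‖cesaro x n‖ ≤ C * Real.exp (a n / (((2*k+1 : ℕ) : ℝ) + 1)) := by
      have h2 : ‖∑ i ∈ Finset.range (n + 1), x i‖
          ≤ ∑ i ∈ Finset.range (n + 1), ‖x i‖ := by
        simpa [] using norm_sum_le (Finset.range (n+1)) x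
      have h3 : ∑ i ∈ Finset.range (n + 1), ‖x i‖
          ≤ ∑ i ∈ Finset.range (n + 1), C * Real.exp (a n / (((2*k+1 : ℕ) : ℝ) + 1)) := by
        apply Finset.sum_le_sum
        intro i hi
        refine (hC i).trans ?_
        apply mul_le_mul_of_nonneg_left _ hC0
        apply Real.exp_le_exp.mpr
        apply div_le_div_of_nonneg_right ?_ (by positivity)
        exact (hmono.monotone (Nat.lt_succ_iff.mp (Finset.mem_range.mp hi)))
      rw [cesaro]
      rw [norm_div]
      have h4 : ‖(n : ℂ) + 1‖ = (n : ℝ) + 1 := by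
        have := Complex.norm_natCast (n+1)
        push_cast at this
        exact this
      rw [h4]
      rw [div_le_iff₀ (by positivity)]
      calc ‖∑ i ∈ Finset.range (n + 1), x i‖
          ≤ ∑ i ∈ Finset.range (n + 1), C * Real.exp (a n / (((2*k+1 : ℕ) : ℝ) + 1)) :=
            h2.trans h3
        _ = ((n:ℝ)+1) * (C * Real.exp (a n / (((2*k+1 : ℕ) : ℝ) + 1))) := by
            rw [Finset.sum_const, Finset.card_range]; push_cast; ring
        _ = C * Real.exp (a n / (((2*k+1 : ℕ) : ℝ) + 1)) * ((n:ℝ)+1) := by ring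
    calc wt a k n * ‖cesaro x n‖
        ≤ wt a k n * (C * Real.exp (a n / (((2*k+1 : ℕ) : ℝ) + 1))) :=
          mul_le_mul_of_nonneg_left hb (wt_pos a k n).le
      _ = C * (wt a k n * Real.exp (a n / (((2*k+1 : ℕ) : ℝ) + 1))) := by ring
      _ = C * Real.exp (-(a n) / (2*((k:ℝ)+1))) := by rw [wt_mul_exp]
  · have hdiv : Tendsto (fun n => a n / (2*((k:ℝ)+1))) atTop atTop :=
      htop.atTop_div_const (by positivity)
    have hneg : Tendsto (fun n => -(a n) / (2*((k:ℝ)+1))) atTop atBot := by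
      simpa [neg_div] using tendsto_neg_atBot_iff.mpr hdiv
    have : Tendsto (fun n => Real.exp (-(a n) / (2*((k:ℝ)+1)))) atTop (𝓝 0) := by
      exact Real.tendsto_exp_atBot.comp hneg
    simpa using this.const_mul C

def tfun (y : ℕ → ℂ) (n : ℕ) : ℂ := ∑ j ∈ Finset.range n, y (j+1) / ((j : ℂ) + 1)

lemma memLambda_tfun {a : ℕ → ℝ} (hmono : StrictMono a) (h1 : ∀ n, 1 < a n)
    (htop : Tendsto a atTop atTop)
    (hnuc : Tendsto (fun n : ℕ => Real.log ((n : ℝ) + 1) / a n) atTop (𝓝 0))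
    {y : ℕ → ℂ} (hy : memLambda a y) : memLambda a (tfun y) := by
  intro k
  obtain ⟨C, hC0, hC⟩ := bound_of_mem hy (2*k+1)
  apply squeeze_zero (fun n => mul_nonneg (wt_pos a k n).le (norm_nonneg _))
    (g := fun (n : ℕ) => C * (((n:ℝ)+1) * Real.exp (-(a n) / (2*((k:ℝ)+1)))))
  · intro n
    have hb : ‖tfun y n‖ ≤ ((n:ℝ)+1) * (C * Real.exp (a n / (((2*k+1 : ℕ) : ℝ) + 1))) := by
      have h2 : ‖tfun y n‖ ≤ ∑ j ∈ Finset.range n, ‖y (j+1) / ((j:ℂ)+1)‖ := by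
        simpa [tfun] using
          norm_sum_le (Finset.range n) (fun j => y (j+1) / ((j:ℂ)+1))
      have h3 : ∑ j ∈ Finset.range n, ‖y (j+1) / ((j:ℂ)+1)‖
          ≤ ∑ j ∈ Finset.range n, C * Real.exp (a n / (((2*k+1 : ℕ) : ℝ) + 1)) := by
        apply Finset.sum_le_sum
        intro j hj
        have hjn : j + 1 ≤ n := Finset.mem_range.mp hj
        have habs : ‖y (j+1) / ((j:ℂ)+1)‖ ≤ ‖y (j+1)‖ := by
          rw [norm_div]
          have h4 : ‖(j : ℂ) + 1‖ = (j : ℝ) + 1 := by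
            have := Complex.norm_natCast (j+1)
            push_cast at this
            exact this
          rw [h4]
          apply div_le_self (norm_nonneg _)
          have : (0:ℝ) ≤ (j:ℝ) := Nat.cast_nonneg j
          linarith
        refine habs.trans ((hC (j+1)).trans ?_)
        apply mul_le_mul_of_nonneg_left _ hC0
        apply Real.exp_le_exp.mpr
        apply div_le_div_of_nonneg_right ?_ (by positivity)
        exact hmono.monotone hjn
      calc ‖tfun y n‖ ≤ _ := h2.trans h3
        _ = (n:ℝ) * (C * Real.exp (a n / (((2*k+1 : ℕ) : ℝ) + 1))) := by
            rw [Finset.sum_const, Finset.card_range]; push_cast; ring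
        _ ≤ ((n:ℝ)+1) * (C * Real.exp (a n / (((2*k+1 : ℕ) : ℝ) + 1))) := by
            have hnn : (0:ℝ) ≤ C * Real.exp (a n / (((2*k+1 : ℕ) : ℝ) + 1)) := by positivity
            nlinarith
    calc wt a k n * ‖tfun y n‖
        ≤ wt a k n * (((n:ℝ)+1) * (C * Real.exp (a n / (((2*k+1 : ℕ) : ℝ) + 1)))) :=
          mul_le_mul_of_nonneg_left hb (wt_pos a k n).le
      _ = C * (((n:ℝ)+1) * (wt a k n * Real.exp (a n / (((2*k+1 : ℕ) : ℝ) + 1)))) := by ring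
      _ = C * (((n:ℝ)+1) * Real.exp (-(a n) / (2*((k:ℝ)+1)))) := by rw [wt_mul_exp]
  · simpa using (tend_aux h1 htop hnuc (by positivity : (0:ℝ) < 2*((k:ℝ)+1))).const_mul C

lemma sum_solve (y : ℕ → ℂ) (hy0 : y 0 = 0) (n : ℕ) :
    ∑ i ∈ Finset.range (n+1), (y i + tfun y i) = ((n:ℂ)+1) * tfun y n := by
  induction n with
  | zero => simp [tfun, hy0]
  | succ n ih =>
    rw [Finset.sum_range_succ, ih]
    have ht : tfun y (n+1) = tfun y n + y (n+1) / ((n:ℂ)+1) := by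
      rw [tfun, Finset.sum_range_succ]; rfl
    have hne : ((n:ℂ)+1) ≠ 0 := Nat.cast_add_one_ne_zero n
    rw [ht]
    push_cast
    field_simp
    ring

lemma solve_spec (y : ℕ → ℂ) (hy0 : y 0 = 0) :
    (fun x => x - cesaro x) (fun n => y n + tfun y n) = y := by
  funext n
  have hne : ((n:ℂ)+1) ≠ 0 := Nat.cast_add_one_ne_zero n
  simp only [Pi.sub_apply, cesaro]
  rw [sum_solve y hy0 n, mul_div_cancel_left₀ _ hne]
  ring

lemma apply_zero_eq (x : ℕ → ℂ) : (x - cesaro x) 0 = 0 := by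
  simp [cesaro]

lemma memLambda_step {a : ℕ → ℝ} (hmono : StrictMono a) (h1 : ∀ n, 1 < a n)
    (htop : Tendsto a atTop atTop) {x : ℕ → ℂ} (hx : memLambda a x) :
    memLambda a (x - cesaro x) :=
  memLambda_sub hx (memLambda_cesaro hmono h1 htop hx)

lemma image_eq {a : ℕ → ℝ} (hmono : StrictMono a) (h1 : ∀ n, 1 < a n)
    (htop : Tendsto a atTop atTop)
    (hnuc : Tendsto (fun n : ℕ => Real.log ((n : ℝ) + 1) / a n) atTop (𝓝 0))
    (m : ℕ) (hm : 1 ≤ m) :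
    (fun x => x - cesaro x)^[m] '' {x : ℕ → ℂ | memLambda a x}
      = {y : ℕ → ℂ | memLambda a y ∧ y 0 = 0} := by
  have hmem_iter : ∀ (j : ℕ) (z : ℕ → ℂ), memLambda a z →
      memLambda a ((fun x => x - cesaro x)^[j] z) := by
    intro j
    induction j with
    | zero => intro z hz; simpa using hz
    | succ j ih =>
      intro z hz
      rw [Function.iterate_succ_apply']
      exact memLambda_step hmono h1 htop (ih z hz)
  apply Set.Subset.antisymm
  · rintro y ⟨z, hz, rfl⟩
    refine ⟨hmem_iter m z hz, ?_⟩
    obtain ⟨j, rfl⟩ := Nat.exists_eq_add_of_le hm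
    rw [add_comm, Function.iterate_succ_apply']
    exact apply_zero_eq _
  · -- surjectivity
    have key : ∀ (j : ℕ) (y : ℕ → ℂ), memLambda a y → y 0 = 0 →
        ∃ x, memLambda a x ∧ (fun x => x - cesaro x)^[j] x = y := by
      intro j
      induction j with
      | zero => intro y hy _; exact ⟨y, hy, rfl⟩
      | succ j ih =>
        intro y hy hy0
        set y' : ℕ → ℂ := fun n => y n + tfun y n with hy'
        have hy'mem : memLambda a y' := memLambda_add hy (memLambda_tfun hmono h1 htop hnuc hy)
        have hy'0 : y' 0 = 0 := by simp [hy', tfun, hy0]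
        obtain ⟨x, hx, hxe⟩ := ih y' hy'mem hy'0
        refine ⟨x, hx, ?_⟩
        rw [Function.iterate_succ_apply', hxe]
        exact solve_spec y hy0
    rintro y ⟨hy, hy0⟩
    obtain ⟨x, hx, hxe⟩ := key m y hy hy0
    exact ⟨x, hx, hxe⟩

/-- if `Λ₀(α)` is nuclear (`(log n)/α_n → 0`), then for every `m ≥ 1`
the range `(I - C)^m(Λ₀(α))` is a closed subspace of `Λ₀(α)`. -/
theorem stmt18 (a : ℕ → ℝ) (hmono : StrictMono a) (h1 : ∀ n, 1 < a n)
    (htop : Tendsto a atTop atTop)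
    (hnuc : Tendsto (fun n : ℕ => Real.log ((n : ℝ) + 1) / a n) atTop (𝓝 0)) :
    ∀ m : ℕ, 1 ≤ m →
      closureIn a ((fun x => x - cesaro x)^[m] '' {x : ℕ → ℂ | memLambda a x})
        = (fun x => x - cesaro x)^[m] '' {x : ℕ → ℂ | memLambda a x} := by
  intro m hm
  rw [image_eq hmono h1 htop hnuc m hm]
  ext x
  constructor
  · rintro ⟨hmem, happ⟩
    refine ⟨hmem, ?_⟩
    -- show x 0 = 0
    by_contra hx0
    have habs : 0 < ‖x 0‖ := by
      simpa [norm_pos_iff] using hx0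
    set ε := wt a 0 0 * ‖x 0‖ with hε
    have hεpos : 0 < ε := mul_pos (wt_pos a 0 0) habs
    obtain ⟨y, ⟨hymem, hy0⟩, hpk⟩ := happ 0 ε hεpos
    have hsub : memLambda a (x - y) := memLambda_sub hmem hymem
    have hbdd : BddAbove (Set.range (fun n => wt a 0 n * ‖(x - y) n‖)) :=
      (hsub 0).bddAbove_range
    have hle : wt a 0 0 * ‖(x - y) 0‖ ≤ pk a 0 (x - y) :=
      le_ciSup hbdd 0
    have heq : (x - y) 0 = x 0 := by simp [hy0]
    rw [heq] at hle
    exact absurd (lt_of_le_of_lt hle hpk) (lt_irrefl ε)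
  · rintro ⟨hmem, hx0⟩
    refine ⟨hmem, ?_⟩
    intro k ε hε
    refine ⟨x, ⟨hmem, hx0⟩, ?_⟩
    have : pk a k (x - x) = 0 := by
      have : ∀ n, wt a k n * ‖(x - x) n‖ = 0 := by
        intro n; simp
      rw [pk]
      simp only [this]
      exact ciSup_const
    rw [this]
    exact hε
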